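/- The join operator ⊔ on the symbolic lattice L yields the least upper bound: for all l₁, l₂, u ∈ L, if l₁ ⊑ u and l₂ ⊑ u, then l₁ ⊔ l₂ ⊑ u. -/

import Mathlib

inductive SymExpr (P U B F : Type*) where
  | bot : SymExpr P U B F
  | top : SymExpr P U B F
  | prim : P → SymExpr P U B F
  | unop : U → SymExpr P U B F → SymExpr P U B F
  | binop : B → SymExpr P U B F → SymExpr P U B F → SymExpr P U B F
  | fn : F → List (SymExpr P U B F) → SymExpr P U B F
  | phi : List (SymExpr P U B F) → SymExpr P U B F

namespace SymExpr

variable {P U B F : Type*}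

/-- The partial order `⊑` on the symbolic lattice. -/
inductive Le : SymExpr P U B F → SymExpr P U B F → Prop where
  | bot (l) : Le .bot l
  | top (l) : Le l .top
  | prim (p : P) : Le (.prim p) (.prim p)
  | unop {l l'} (u : U) : Le l l' → Le (.unop u l) (.unop u l')
  | binop {l₁ l₂ l₁' l₂'} (b : B) : Le l₁ l₁' → Le l₂ l₂' →
      Le (.binop b l₁ l₂) (.binop b l₁' l₂')
  | fn {ls ls'} (f : F) : List.Forall₂ Le ls ls' → Le (.fn f ls) (.fn f ls')
  | phi {ls ls'} : List.Forall₂ Le ls ls' → Le (.phi ls) (.phi ls')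

attribute [local instance] Classical.propDecidable

mutual
noncomputable def join : SymExpr P U B F → SymExpr P U B F → SymExpr P U B F
  | .bot, l => l
  | l, .bot => l
  | .prim p, .prim p' => if p = p' then .prim p else .top
  | .unop u l, .unop u' l' => if u = u' then .unop u (join l l') else .top
  | .binop b l₁ l₂, .binop b' l₁' l₂' =>
      if b = b' then .binop b (join l₁ l₁') (join l₂ l₂') else .top
  | .fn f ls, .fn f' ls' =>
      if f = f' ∧ ls.length = ls'.length then .fn f (joinList ls ls') else .top
  | .phi ls, .phi ls' =>
      if ls.length = ls'.length then .phi (joinList ls ls') else .top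
  | _, _ => .top

noncomputable def joinList : List (SymExpr P U B F) → List (SymExpr P U B F) → List (SymExpr P U B F)
  | l :: ls, l' :: ls' => join l l' :: joinList ls ls'
  | _, _ => []
end

mutual
noncomputable def meet : SymExpr P U B F → SymExpr P U B F → SymExpr P U B F
  | .top, l => l
  | l, .top => l
  | .prim p, .prim p' => if p = p' then .prim p else .bot
  | .unop u l, .unop u' l' => if u = u' then .unop u (meet l l') else .bot
  | .binop b l₁ l₂, .binop b' l₁' l₂' =>
      if b = b' then .binop b (meet l₁ l₁') (meet l₂ l₂') else .bot
  | .fn f ls, .fn f' ls' =>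
      if f = f' ∧ ls.length = ls'.length then .fn f (meetList ls ls') else .bot
  | .phi ls, .phi ls' =>
      if ls.length = ls'.length then .phi (meetList ls ls') else .bot
  | _, _ => .bot

noncomputable def meetList : List (SymExpr P U B F) → List (SymExpr P U B F) → List (SymExpr P U B F)
  | l :: ls, l' :: ls' => meet l l' :: meetList ls ls'
  | _, _ => []
end

mutual
def depth : SymExpr P U B F → ℕ
  | .bot => 0
  | .top => 0
  | .prim _ => 0
  | .unop _ l => 1 + depth l
  | .binop _ l₁ l₂ => 1 + max (depth l₁) (depth l₂)
  | .fn _ ls => 1 + depthList ls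
  | .phi ls => 1 + depthList ls

def depthList : List (SymExpr P U B F) → ℕ
  | [] => 0
  | l :: ls => max (depth l) (depthList ls)
end

/-- The widening truncation `T_i`. -/
def trunc : ℕ → SymExpr P U B F → SymExpr P U B F
  | _, .bot => .bot
  | _, .top => .top
  | _, .prim p => .prim p
  | 0, .unop _ _ => .top
  | 0, .binop _ _ _ => .top
  | 0, .fn _ _ => .top
  | 0, .phi _ => .top
  | i + 1, .unop u l => .unop u (trunc i l)
  | i + 1, .binop b l₁ l₂ => .binop b (trunc i l₁) (trunc i l₂)
  | i + 1, .fn f ls => .fn f (ls.map (fun l => trunc i l))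
  | i + 1, .phi ls => .phi (ls.map (fun l => trunc i l))

end SymExpr

/-! If `l₁ ⊑ u` and `l₂ ⊑ u` with neither side trivial (`l₁, l₂ ≠ ⊥`, `u ≠ ⊤`), then `l₁`, `l₂`
and `u` have the same head symbol (and, for `fn` and `phi`, argument lists of the same length),
so `l₁ ⊔ l₂` is computed componentwise and the claim follows by induction on the two derivations,
simultaneously with its componentwise version for argument lists. -/

namespace SymExpr

variable {P U B F : Type*}

@[simp]
theorem bot_join (l : SymExpr P U B F) : join .bot l = l := by
  rw [join]

@[simp]
theorem join_bot (l : SymExpr P U B F) : join l .bot = l := by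
  cases l <;> rw [join] <;> nofun

theorem join_prim_self (p : P) : join (.prim p : SymExpr P U B F) (.prim p) = .prim p := by
  rw [join, if_pos rfl]

theorem join_unop_unop (u : U) (l l' : SymExpr P U B F) :
    join (.unop u l) (.unop u l') = .unop u (join l l') := by
  rw [join, if_pos rfl]

theorem join_binop_binop (b : B) (l₁ l₂ l₁' l₂' : SymExpr P U B F) :
    join (.binop b l₁ l₂) (.binop b l₁' l₂') = .binop b (join l₁ l₁') (join l₂ l₂') := by
  rw [join, if_pos rfl]

theorem join_fn_fn (f : F) {ls ls' : List (SymExpr P U B F)} (h : ls.length = ls'.length) :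
    join (.fn f ls) (.fn f ls') = .fn f (joinList ls ls') := by
  rw [join, if_pos ⟨rfl, h⟩]

theorem join_phi_phi {ls ls' : List (SymExpr P U B F)} (h : ls.length = ls'.length) :
    join (.phi ls) (.phi ls') = .phi (joinList ls ls') := by
  rw [join, if_pos h]

mutual

theorem Le.join : ∀ {l₁ l₂ u : SymExpr P U B F}, Le l₁ u → Le l₂ u → Le (l₁.join l₂) u
  | _, _, _, .bot _, h => by rwa [bot_join]
  | _, _, _, h, .bot _ => by rwa [join_bot]
  | _, _, _, .top _, _ => .top _
  | _, _, _, .prim p, .prim _ => by rw [join_prim_self]; exact .prim p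
  | _, _, _, .unop u h, .unop _ h' => by rw [join_unop_unop]; exact .unop u (h.join h')
  | _, _, _, .binop b h₁ h₂, .binop _ h₁' h₂' => by
      rw [join_binop_binop]; exact .binop b (h₁.join h₁') (h₂.join h₂')
  | _, _, _, .fn f hs, .fn _ hs' => by
      rw [join_fn_fn f (hs.length_eq.trans hs'.length_eq.symm)]
      exact .fn f (forall₂_joinList hs hs')
  | _, _, _, .phi hs, .phi hs' => by
      rw [join_phi_phi (hs.length_eq.trans hs'.length_eq.symm)]
      exact .phi (forall₂_joinList hs hs')

theorem forall₂_joinList : ∀ {ls ls' us : List (SymExpr P U B F)},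
    List.Forall₂ Le ls us → List.Forall₂ Le ls' us → List.Forall₂ Le (joinList ls ls') us
  | _, _, _, .nil, .nil => .nil
  | _, _, _, .cons h hs, .cons h' hs' => by
      rw [joinList]; exact .cons (h.join h') (forall₂_joinList hs hs')

end

end SymExpr

/-- the join is the least upper bound. -/
theorem SymExpr.join_le {P U B F : Type*} (l₁ l₂ u : SymExpr P U B F)
    (h₁ : l₁.Le u) (h₂ : l₂.Le u) : (l₁.join l₂).Le u :=
  h₁.join h₂
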